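/- arXiv:0708.1877 — 3 statements merged into one kernel-verified Lean document; each statement's English description precedes it below -/
import Mathlib

section
/- The k-th order empirical entropy is superadditive: for any strings s₁ and s₂ over a fixed alphabet and any integer k ≥ 0, |s₁s₂| · H_k(s₁s₂) ≥ |s₁| · H_k(s₁) + |s₂| · H_k(s₂). -/
/-- characters immediately following occurrences of context `w` in `s` -/
def follow {α : Type*} [DecidableEq α] (s w : List α) : List α :=
  s.tails.filterMap (fun t => if t.take w.length = w then (t.drop w.length).head? else none)

/-- zeroth-order empirical entropy (base 2), with the convention 0·log(·)=0 -/
noncomputable def H0 {σ : ℕ} (t : List (Fin σ)) : ℝ :=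
  ∑ a : Fin σ, ((t.count a : ℝ) / t.length) * Real.logb 2 ((t.length : ℝ) / t.count a)

/-- `|s| · H_k(s)`: sum over all contexts `w` of length `k` of `|s_w| · H_0(s_w)` -/
noncomputable def nHk {σ : ℕ} (s : List (Fin σ)) (k : ℕ) : ℝ :=
  ∑ w : Fin k → Fin σ,
    ((follow s (List.ofFn w)).length : ℝ) * H0 (follow s (List.ofFn w))

/-- `k`-th order empirical entropy -/
noncomputable def Hk {σ : ℕ} (s : List (Fin σ)) (k : ℕ) : ℝ := nHk s k / s.length

/-!
Since `|s| · H_k(s) = ∑_w |s_w| · H₀(s_w)`, it suffices to compare context by context: every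
occurrence of a context `w` followed by a character inside `s₁` or inside `s₂` is still one in
`s₁s₂`, so `(s₁)_w ++ (s₂)_w` is a sublist of `(s₁s₂)_w`. The quantity `|t| · H₀(t)` depends only on
the vector of letter counts `c`, as `∑ₐ cₐ log(N / cₐ)` with `N = ∑ₐ cₐ`; coordinatewise, the
log-sum inequality makes this superadditive, and since it is nonnegative it is also monotone
under adding further letters.
-/

open Real Finset

lemma mul_log_div_add_mul_log_div_le {x y p q : ℝ} (hx : 0 ≤ x) (hy : 0 ≤ y) (hxp : x ≤ p)
    (hyq : y ≤ q) : x * log (p / x) + y * log (q / y) ≤ (x + y) * log ((p + q) / (x + y)) := by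
  rcases hx.eq_or_lt with rfl | hx
  · rcases hy.eq_or_lt with rfl | hy
    · simp
    · simp only [zero_mul, zero_add]
      gcongr
      · exact div_pos (hy.trans_le hyq) hy
      · linarith
  rcases hy.eq_or_lt with rfl | hy
  · simp only [zero_mul, add_zero]
    gcongr
    · exact div_pos (hx.trans_le hxp) hx
    · linarith
  have hp : 0 < p := hx.trans_le hxp
  have hq : 0 < q := hy.trans_le hyq
  have hxy : 0 < x + y := add_pos hx hy
  have hjensen := strictConcaveOn_log_Ioi.concaveOn.2 (Set.mem_Ioi.2 (div_pos hp hx))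
    (Set.mem_Ioi.2 (div_pos hq hy)) (div_nonneg hx.le hxy.le) (div_nonneg hy.le hxy.le)
    (by field_simp)
  have hmean : x / (x + y) * (p / x) + y / (x + y) * (q / y) = (p + q) / (x + y) := by
    field_simp
  simp only [smul_eq_mul, hmean] at hjensen
  calc x * log (p / x) + y * log (q / y)
      = (x + y) * (x / (x + y) * log (p / x) + y / (x + y) * log (q / y)) := by field_simp
    _ ≤ (x + y) * log ((p + q) / (x + y)) := mul_le_mul_of_nonneg_left hjensen hxy.le

lemma mul_logb_div_add_mul_logb_div_le {b x y p q : ℝ} (hb : 1 < b) (hx : 0 ≤ x) (hy : 0 ≤ y)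
    (hxp : x ≤ p) (hyq : y ≤ q) :
    x * logb b (p / x) + y * logb b (q / y) ≤ (x + y) * logb b ((p + q) / (x + y)) := by
  simp only [logb, ← mul_div_assoc, ← add_div]
  exact div_le_div_of_nonneg_right (mul_log_div_add_mul_log_div_le hx hy hxp hyq) (log_pos hb).le

noncomputable def countEntropy {ι : Type*} [Fintype ι] (c : ι → ℝ) : ℝ :=
  ∑ i, c i * logb 2 ((∑ j, c j) / c i)

section countEntropy

variable {ι : Type*} [Fintype ι] {c d e : ι → ℝ}

lemma countEntropy_nonneg (hc : 0 ≤ c) : 0 ≤ countEntropy c := by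
  refine sum_nonneg fun i _ => ?_
  rcases (hc i).eq_or_lt with hci | hci
  · simp [← hci]
  · refine mul_nonneg hci.le (logb_nonneg one_lt_two ((one_le_div hci).2 ?_))
    exact single_le_sum (fun j _ => hc j) (mem_univ i)

lemma countEntropy_add_countEntropy_le (hc : 0 ≤ c) (hd : 0 ≤ d) :
    countEntropy c + countEntropy d ≤ countEntropy (c + d) := by
  simp only [countEntropy, ← sum_add_distrib, Pi.add_apply]
  refine sum_le_sum fun i _ => ?_
  rw [sum_add_distrib]
  exact mul_logb_div_add_mul_logb_div_le one_lt_two (hc i) (hd i)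
    (single_le_sum (fun j _ => hc j) (mem_univ i)) (single_le_sum (fun j _ => hd j) (mem_univ i))

lemma countEntropy_add_countEntropy_le_of_add_le (hc : 0 ≤ c) (hd : 0 ≤ d) (hcde : c + d ≤ e) :
    countEntropy c + countEntropy d ≤ countEntropy e := by
  have hrest := countEntropy_add_countEntropy_le (add_nonneg hc hd) (sub_nonneg.2 hcde)
  rw [add_sub_cancel] at hrest
  linarith [countEntropy_add_countEntropy_le hc hd, countEntropy_nonneg (sub_nonneg.2 hcde)]

end countEntropy

lemma length_mul_H0 {σ : ℕ} (t : List (Fin σ)) :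
    (t.length : ℝ) * H0 t = countEntropy fun a => (t.count a : ℝ) := by
  have hsum : ∑ a, (t.count a : ℝ) = t.length := by
    have := Multiset.sum_count_eq_card (s := univ) (m := (t : Multiset (Fin σ))) (by simp)
    rw [Multiset.coe_card] at this
    simp only [Multiset.coe_count] at this
    exact_mod_cast this
  rw [H0, countEntropy, hsum, mul_sum]
  refine sum_congr rfl fun a _ => ?_
  rcases eq_or_ne t [] with rfl | ht
  · simp
  · have : (t.length : ℝ) ≠ 0 := by simpa using ht
    field_simp

lemma length_mul_H0_add_le_of_sublist {σ : ℕ} {t₁ t₂ t : List (Fin σ)} (h : (t₁ ++ t₂).Sublist t) :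
    (t₁.length : ℝ) * H0 t₁ + t₂.length * H0 t₂ ≤ t.length * H0 t := by
  simp only [length_mul_H0]
  refine countEntropy_add_countEntropy_le_of_add_le (fun _ => by simp) (fun _ => by simp)
    fun a => ?_
  have hcount := h.count_le a
  rw [List.count_append] at hcount
  simp only [Pi.add_apply]
  exact_mod_cast hcount

section follow

variable {α : Type*} [DecidableEq α]

def charAfter (w t : List α) : Option α :=
  if t.take w.length = w then (t.drop w.length).head? else none

lemma follow_eq_filterMap_charAfter (s w : List α) :
    follow s w = s.tails.filterMap (charAfter w) := rfl

lemma follow_nil (w : List α) : follow [] w = [] := by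
  cases w <;> simp [follow]

lemma charAfter_append_of_eq_some {w x : List α} {b : α} (s : List α)
    (h : charAfter w x = some b) : charAfter w (x ++ s) = some b := by
  unfold charAfter at h ⊢
  split_ifs at h with hw
  have hlen : w.length ≤ x.length := by
    by_contra! hlt
    simp [List.drop_eq_nil_of_le hlt.le] at h
  rw [List.take_append_of_le_length hlen, if_pos hw, List.drop_append_of_le_length hlen,
    List.head?_append, h, Option.some_or]

lemma follow_append_sublist (s₁ s₂ w : List α) :
    (follow s₁ w ++ follow s₂ w).Sublist (follow (s₁ ++ s₂) w) := by
  induction s₁ with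
  | nil => simp [follow_nil]
  | cons a r ih =>
    simp only [follow_eq_filterMap_charAfter, List.tails_cons, List.filterMap_cons,
      List.cons_append] at ih ⊢
    rcases hg : charAfter w (a :: r) with _ | b
    · rcases charAfter w (a :: (r ++ s₂)) with _ | c
      · exact ih
      · exact ih.trans (List.sublist_cons_self c _)
    · rw [← List.cons_append, charAfter_append_of_eq_some s₂ hg]
      exact ih.cons_cons b

end follow

lemma length_mul_Hk {σ : ℕ} (s : List (Fin σ)) (k : ℕ) : (s.length : ℝ) * Hk s k = nHk s k := by
  rcases eq_or_ne s [] with rfl | hs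
  · simp [nHk, follow_nil]
  · have : (s.length : ℝ) ≠ 0 := by simpa using hs
    rw [Hk, mul_div_cancel₀ _ this]

/-- Superadditivity of k-th order empirical entropy:
|s₁s₂|·H_k(s₁s₂) ≥ |s₁|·H_k(s₁) + |s₂|·H_k(s₂). -/
theorem stmt_2 (σ k : ℕ) (s₁ s₂ : List (Fin σ)) :
    ((s₁ ++ s₂).length : ℝ) * Hk (s₁ ++ s₂) k ≥
      (s₁.length : ℝ) * Hk s₁ k + (s₂.length : ℝ) * Hk s₂ k := by
  rw [ge_iff_le, length_mul_Hk, length_mul_Hk, length_mul_Hk, nHk, nHk, nHk, ← sum_add_distrib]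
  exact sum_le_sum fun w _ => length_mul_H0_add_le_of_sublist (follow_append_sublist s₁ s₂ _)
end

section
/- Let d consist of all but the last k-1 characters of a linearized σ-ary de Bruijn sequence of order k, and let s be a concatenation of m ≥ 1 copies of d. Then H_k(s) = 0. -/
/-- linearized de Bruijn sequence -/
def IsLinDeBruijn (σ k : ℕ) (s : List (Fin σ)) : Prop :=
  ∀ w : List (Fin σ), w.length = k →
    ∃! i, i + k ≤ s.length ∧ (s.drop i).take k = w

namespace List

variable {α : Type*}

theorem getElem?_flatten_replicate (l : List α) {m i : ℕ} (h : i < m * l.length) :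
    (replicate m l).flatten[i]? = l[i % l.length]? := by
  induction m generalizing i with
  | zero => simp at h
  | succ m ih =>
    rw [replicate_succ, flatten_cons, getElem?_append]
    split_ifs with hi
    · rw [Nat.mod_eq_of_lt hi]
    · rw [Nat.succ_mul] at h
      rw [ih (by omega), ← Nat.mod_eq_sub_mod (by omega)]

theorem getElem?_append_take_self (l : List α) {r i : ℕ} (hr : r ≤ l.length)
    (h : i < l.length + r) : (l ++ l.take r)[i]? = l[i % l.length]? := by
  rw [getElem?_append]
  split_ifs with hi
  · rw [Nat.mod_eq_of_lt hi]
  · rw [getElem?_take, if_pos (by omega), Nat.mod_eq_sub_mod (by omega),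
      Nat.mod_eq_of_lt (by omega)]

theorem take_drop_eq_take_drop {l l' : List α} {i j k : ℕ}
    (h : ∀ t < k, l[i + t]? = l'[j + t]?) : (l.drop i).take k = (l'.drop j).take k := by
  refine ext_getElem? fun t => ?_
  simp only [getElem?_take, getElem?_drop]
  split_ifs with ht
  · exact h t ht
  · rfl

end List

theorem mem_follow_iff {α : Type*} [DecidableEq α] {s w : List α} {x : α} :
    x ∈ follow s w ↔ ∃ i, (s.drop i).take w.length = w ∧ s[i + w.length]? = some x := by
  simp only [follow, List.mem_filterMap, List.mem_tails]
  constructor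
  · rintro ⟨t, hts, hx⟩
    rw [List.suffix_iff_eq_drop] at hts
    rw [hts] at hx
    split_ifs at hx with hw
    exact ⟨_, hw, by rwa [List.drop_drop, List.head?_drop] at hx⟩
  · rintro ⟨i, hw, hx⟩
    exact ⟨s.drop i, List.drop_suffix i s, by rwa [if_pos hw, List.drop_drop, List.head?_drop]⟩

def NextDetermined {α : Type*} (s : List α) (k : ℕ) : Prop :=
  ∀ i j x y, (s.drop i).take k = (s.drop j).take k →
    s[i + k]? = some x → s[j + k]? = some y → x = y

theorem H0_eq_zero_of_forall_eq {σ : ℕ} {t : List (Fin σ)} (h : ∀ x ∈ t, ∀ y ∈ t, x = y) :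
    H0 t = 0 := by
  refine Finset.sum_eq_zero fun a _ => ?_
  rcases Nat.eq_zero_or_pos (t.count a) with ha | ha
  · simp [ha]
  · have hcount : t.count a = t.length :=
      List.count_eq_length.mpr (h a (List.count_pos_iff.mp ha))
    have hlen : (t.length : ℝ) ≠ 0 := by exact_mod_cast (hcount ▸ ha).ne'
    rw [hcount, div_self hlen, Real.logb_one, mul_zero]

theorem Hk_eq_zero_of_nextDetermined {σ k : ℕ} {s : List (Fin σ)} (h : NextDetermined s k) :
    Hk s k = 0 := by
  suffices nHk s k = 0 by rw [Hk, this, zero_div]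
  refine Finset.sum_eq_zero fun w _ => ?_
  suffices H0 (follow s (List.ofFn w)) = 0 by rw [this, mul_zero]
  refine H0_eq_zero_of_forall_eq fun x hx y hy => ?_
  rw [mem_follow_iff, List.length_ofFn] at hx hy
  obtain ⟨i, hi, hx⟩ := hx
  obtain ⟨j, hj, hy⟩ := hy
  exact h i j x y (hi.trans hj.symm) hx hy

theorem nextDetermined_of_periodic {α : Type*} {p s d : List α} {k : ℕ}
    (hs : ∀ i < s.length, s[i]? = p[i % p.length]?)
    (hd : ∀ i < p.length + k - 1, d[i]? = p[i % p.length]?)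
    (huniq : ∀ i j, i < p.length → j < p.length →
      (d.drop i).take k = (d.drop j).take k → i = j) :
    NextDetermined s k := by
  intro i j x y hw hx hy
  have hx' : p[(i + k) % p.length]? = some x := hs _ (List.getElem?_eq_some_iff.mp hx).1 ▸ hx
  have hy' : p[(j + k) % p.length]? = some y := hs _ (List.getElem?_eq_some_iff.mp hy).1 ▸ hy
  have hn : 0 < p.length := List.length_pos_of_mem (List.mem_of_getElem? hx')
  have window_eq : ∀ l, l + k < s.length →
      (s.drop l).take k = (d.drop (l % p.length)).take k := by
    intro l hl
    refine List.take_drop_eq_take_drop fun t ht => ?_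
    have := Nat.mod_lt l hn
    rw [hs _ (by omega), hd _ (by omega), Nat.mod_add_mod]
  have hij : i % p.length = j % p.length :=
    huniq _ _ (Nat.mod_lt i hn) (Nat.mod_lt j hn) <| by
      rw [← window_eq i (List.getElem?_eq_some_iff.mp hx).1,
        ← window_eq j (List.getElem?_eq_some_iff.mp hy).1, hw]
  rw [← Nat.mod_add_mod, hij, Nat.mod_add_mod] at hx'
  exact Option.some.inj (hx'.symm.trans hy')

theorem IsLinDeBruijn.eq_of_take_drop_eq {σ k : ℕ} {d : List (Fin σ)} (hdb : IsLinDeBruijn σ k d)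
    {i j : ℕ} (hi : i + k ≤ d.length) (hj : j + k ≤ d.length)
    (h : (d.drop i).take k = (d.drop j).take k) : i = j := by
  have hw : ((d.drop i).take k).length = k := by simp only [List.length_take, List.length_drop]; omega
  obtain ⟨r, -, hr⟩ := hdb _ hw
  exact (hr i ⟨hi, rfl⟩).trans (hr j ⟨hj, h.symm⟩).symm

theorem stmt_4_general (σ k m : ℕ) (hσ : 2 ≤ σ) (hk : 1 ≤ k)
    (d : List (Fin σ)) (hlen : d.length = σ ^ k + k - 1)
    (hdb : IsLinDeBruijn σ k d)
    (hends : d.take (k - 1) = d.drop (d.length - (k - 1))) :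
    Hk (List.replicate m (d.take (σ ^ k))).flatten k = 0 := by
  set n := σ ^ k
  have hkn : k < n := Nat.lt_pow_self hσ
  set p := d.take n
  have hp : p.length = n := by simp only [p, List.length_take, hlen]; omega
  have hd : d = p ++ p.take (k - 1) := by
    rw [List.take_take, min_eq_left (by omega), hends, show d.length - (k - 1) = n by omega,
      List.take_append_drop]
  apply Hk_eq_zero_of_nextDetermined
  apply nextDetermined_of_periodic (p := p) (d := d)
  · intro i hi
    rw [List.getElem?_flatten_replicate]
    simpa [hp] using hi
  · intro i hi
    rw [hd, List.getElem?_append_take_self _ (by omega) (by omega)]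
  · intro i j hi hj h
    exact hdb.eq_of_take_drop_eq (by omega) (by omega) h

/-- If d is all but the last k-1 characters of a linearized σ-ary de Bruijn
sequence of order k, and s is m ≥ 1 concatenated copies of d, then H_k(s) = 0. -/
theorem stmt_4 (σ k m : ℕ) (hσ : 2 ≤ σ) (hk : 1 ≤ k) (hm : 1 ≤ m)
    (d : List (Fin σ)) (hlen : d.length = σ ^ k + k - 1)
    (hdb : IsLinDeBruijn σ k d)
    (hends : d.take (k - 1) = d.drop (d.length - (k - 1))) :
    Hk (List.replicate m (d.take (σ ^ k))).flatten k = 0 :=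
  stmt_4_general σ k m hσ hk d hlen hdb hends
end

section
/- Let d be a string of length ℓ whose first k-1 characters equal its last k-1 characters, and suppose every k-tuple occurring in the cyclic string of d's first ℓ-(k-1) characters occurs exactly once. Then in s = d' d' ... d' (m copies of d', where d' is d without its last k-1 characters), every occurrence of each k-tuple is followed by a uniquely determined character (or the end of s). -/
theorem List.getElem?_flatten_replicate_s18 {α : Type*} (l : List α) {m j : ℕ}
    (hj : j < m * l.length) : (List.replicate m l).flatten[j]? = l[j % l.length]? := by
  induction m generalizing j with
  | zero => simp at hj
  | succ m ih =>
    rw [List.replicate_succ, List.flatten_cons]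
    rcases lt_or_ge j l.length with h | h
    · rw [List.getElem?_append_left h, Nat.mod_eq_of_lt h]
    · rw [List.getElem?_append_right h, Nat.mod_eq_sub_mod h]
      exact ih (by rw [Nat.succ_mul] at hj; omega)

theorem List.getElem?_add_of_take_eq_drop {α : Type*} {l : List α} {r : ℕ}
    (h : l.take r = l.drop (l.length - r)) {j : ℕ} (hj : j + (l.length - r) < l.length) :
    l[j + (l.length - r)]? = l[j]? := by
  have hjr : j < r := by omega
  rw [add_comm, ← List.getElem?_drop, ← h, List.getElem?_take, if_pos hjr]

theorem List.getElem?_mod_of_getElem?_add {α : Type*} {l : List α} {n : ℕ}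
    (h : ∀ j, j + n < l.length → l[j + n]? = l[j]?) {j : ℕ} (hj : j < l.length) :
    l[j]? = l[j % n]? := by
  induction j using Nat.strong_induction_on with
  | _ j ih =>
    rcases lt_or_ge j n with hjn | hnj
    · rw [Nat.mod_eq_of_lt hjn]
    · obtain rfl | hn := n.eq_zero_or_pos
      · rw [Nat.mod_zero]
      obtain ⟨i, rfl⟩ := Nat.exists_eq_add_of_le' hnj
      rw [h i hj, Nat.add_mod_right, ih i (by omega) (by omega)]

theorem exists_occurrence_of_mem_follow_flatten_replicate {α : Type*} [DecidableEq α]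
    {d w : List α} {n m : ℕ} {x : α} (hn : 0 < n) (hnd : n ≤ d.length)
    (hwd : n + w.length ≤ d.length + 1) (hper : ∀ j < d.length, d[j]? = d[j % n]?)
    (hx : x ∈ follow (List.replicate m (d.take n)).flatten w) :
    ∃ p < n, (d.drop p).take w.length = w ∧ d[(p + w.length) % n]? = some x := by
  set s := (List.replicate m (d.take n)).flatten
  have hd' : (d.take n).length = n := List.length_take_of_le hnd
  have hs : ∀ j < s.length, s[j]? = d[j % n]? := fun j hj => by
    have hj' : j < m * (d.take n).length := by simpa [s, mul_comm] using hj
    rw [List.getElem?_flatten_replicate_s18 _ hj', hd', List.getElem?_take,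
      if_pos (Nat.mod_lt j hn)]
  obtain ⟨i, hwi, hxi⟩ := mem_follow_iff.mp hx
  have hik : i + w.length < s.length := (List.getElem?_eq_some_iff.mp hxi).1
  refine ⟨i % n, Nat.mod_lt i hn, ?_, ?_⟩
  · refine Eq.trans (List.ext_getElem? fun t => ?_) hwi
    simp only [List.getElem?_take, List.getElem?_drop]
    split_ifs with ht
    · have hit : i % n + t < d.length := by have := Nat.mod_lt i hn; omega
      rw [hper _ hit, Nat.mod_add_mod, hs _ (by omega)]
    · rfl
  · rw [Nat.mod_add_mod, ← hs _ hik, hxi]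

theorem stmt_18_general (σ k m : ℕ) (hk : 1 ≤ k)
    (d : List (Fin σ)) (hlen : d.length = σ ^ k + k - 1)
    (hdb : IsLinDeBruijn σ k d)
    (hends : d.take (k - 1) = d.drop (d.length - (k - 1))) :
    ∀ w : List (Fin σ), w.length = k →
      ∀ a ∈ follow (List.replicate m (d.take (σ ^ k))).flatten w,
        ∀ b ∈ follow (List.replicate m (d.take (σ ^ k))).flatten w, a = b := by
  intro w hw a ha b hb
  have hn : 0 < σ ^ k := pow_pos a.pos k
  have hper : ∀ j < d.length, d[j]? = d[j % σ ^ k]? := by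
    have hperiod : d.length - (k - 1) = σ ^ k := by omega
    exact fun j => List.getElem?_mod_of_getElem?_add
      (hperiod ▸ fun j => List.getElem?_add_of_take_eq_drop hends)
  obtain ⟨p, hp, hpw, hpa⟩ := exists_occurrence_of_mem_follow_flatten_replicate hn
    (by omega) (by omega) hper ha
  obtain ⟨q, hq, hqw, hqb⟩ := exists_occurrence_of_mem_follow_flatten_replicate hn
    (by omega) (by omega) hper hb
  obtain rfl : p = q := (hdb w hw).unique ⟨by omega, hw ▸ hpw⟩ ⟨by omega, hw ▸ hqw⟩
  exact Option.some.inj (hpa.symm.trans hqb)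

/-- In s = d'd'…d' (m copies of the first σ^k characters of a linearized
de Bruijn sequence d of order k), every occurrence of each k-tuple is followed
by a uniquely determined character (or the end of s). -/
theorem stmt_18 (σ k m : ℕ) (hσ : 2 ≤ σ) (hk : 1 ≤ k) (hm : 1 ≤ m)
    (d : List (Fin σ)) (hlen : d.length = σ ^ k + k - 1)
    (hdb : IsLinDeBruijn σ k d)
    (hends : d.take (k - 1) = d.drop (d.length - (k - 1))) :
    ∀ w : List (Fin σ), w.length = k →
      ∀ a ∈ follow (List.replicate m (d.take (σ ^ k))).flatten w,
        ∀ b ∈ follow (List.replicate m (d.take (σ ^ k))).flatten w, a = b :=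
  stmt_18_general σ k m hk d hlen hdb hends
end
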